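/- For parameters a, b with a, b > -1, a nonnegative integer j, and any complex c, the integral ∫_{-1}^{1} (1-r)^a (1+r)^b P_j^{(a,b)}(r) e^{cr} dr equals 2^{a+b+1} · (Γ(a+j+1)Γ(b+j+1) / (j! Γ(a+b+2j+2))) · e^{-c} (2c)^j · ₁F₁(b+j+1; a+b+2j+2; 2c), where P_j^{(a,b)} is the Jacobi polynomial. -/

import Mathlib

/-!
Expand `P_j^{(a,b)}(r)` in powers of `(1 - r) / 2` and write
`e^{cr} = e^{-c} ∑ₖ cᵏ (1 + r)ᵏ / k!`. Every term is a Beta integral, and the series may be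
integrated termwise since it is dominated by the weight times `e^{2|c|}`. For fixed `k` the finite
sum over the Jacobi coefficients is the moment `∫ (1-r)^a (1+r)^b P_j(r) (1+r)^k dr`; a
Chu–Vandermonde summation evaluates it as a multiple of the falling factorial
`k (k-1) ⋯ (k-j+1)`. So the moments with `k < j` vanish (orthogonality), and reindexing
`k = n + j` turns the remaining series into `₁F₁(b+j+1; a+b+2j+2; 2c)`.
-/

open Complex Finset

/-- Pochhammer symbol `(a)_n` for complex `a`. -/
noncomputable def poch (a : ℂ) (n : ℕ) : ℂ := ∏ i ∈ Finset.range n, (a + i)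

/-- Confluent hypergeometric function `₁F₁(a; b; x)`. -/
noncomputable def F11 (a b x : ℂ) : ℂ :=
  ∑' k : ℕ, poch a k * x ^ k / (poch b k * k.factorial)

/-- Gauss hypergeometric function `₂F₁(a, b; c; x)`. -/
noncomputable def F21 (a b c x : ℂ) : ℂ :=
  ∑' k : ℕ, poch a k * poch b k * x ^ k / (poch c k * k.factorial)

/-- Generalized Laguerre polynomial `L_n^{(α)}(x)`. -/
noncomputable def laguerre (n : ℕ) (α x : ℂ) : ℂ :=
  poch (α + 1) n / n.factorial * F11 (-(n : ℂ)) (α + 1) x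

/-- Jacobi polynomial `P_j^{(a,b)}(r)`. -/
noncomputable def jacobiP (j : ℕ) (a b r : ℂ) : ℂ :=
  poch (a + 1) j / j.factorial * F21 (-(j : ℂ)) ((j : ℂ) + a + b + 1) (a + 1) ((1 - r) / 2)

open MeasureTheory

lemma poch_eq_ascPochhammer_eval (z : ℂ) (n : ℕ) : poch z n = (ascPochhammer ℂ n).eval z := by
  induction n with
  | zero => simp [poch]
  | succ n ih => rw [ascPochhammer_succ_eval, ← ih, poch, prod_range_succ, ← poch]

lemma poch_succ (z : ℂ) (n : ℕ) : poch z (n + 1) = poch z n * (z + n) :=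
  prod_range_succ _ _

lemma poch_succ' (z : ℂ) (n : ℕ) : poch z (n + 1) = z * poch (z + 1) n := by
  simp [poch_eq_ascPochhammer_eval, ascPochhammer_succ_left, add_comm]

lemma poch_neg_natCast (j m : ℕ) : poch (-j) m = (-1) ^ m * j.descFactorial m := by
  rw [poch_eq_ascPochhammer_eval, ascPochhammer_eval_neg_eq_descPochhammer,
    descPochhammer_eval_eq_descFactorial]

lemma poch_natCast_sub_add_one (k j : ℕ) : poch ((k : ℂ) - j + 1) j = k.descFactorial j := by
  rw [poch_eq_ascPochhammer_eval, ← descPochhammer_eval_eq_ascPochhammer,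
    descPochhammer_eval_eq_descFactorial]

lemma Complex.Gamma_add_natCast {z : ℂ} (hz : 0 < z.re) (n : ℕ) :
    Gamma (z + n) = Gamma z * poch z n := by
  have hz' : ∀ k : ℕ, z ≠ -k := by
    rintro k rfl
    simp at hz
    linarith [k.cast_nonneg (α := ℝ)]
  rw [poch_eq_ascPochhammer_eval, ← Gamma_add_nat_div_Gamma_eq z hz',
    mul_div_cancel₀ _ (Gamma_ne_zero_of_re_pos hz)]

lemma poch_ne_zero_of_re_pos {z : ℂ} (hz : 0 < z.re) (n : ℕ) : poch z n ≠ 0 := by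
  have h := Gamma_ne_zero_of_re_pos (s := z + n) (by simp; linarith [n.cast_nonneg (α := ℝ)])
  rw [Gamma_add_natCast hz] at h
  exact right_ne_zero_of_mul h

/-- Chu–Vandermonde in the form `(c + t)_j ₂F₁(-j, c; c + t; 1) = (t)_j`. Pascal's rule writes
the sum for `j + 1` as `c + t + j` times the sum for `j` minus `c` times the sum for `j` at
`c + 1`. -/
lemma sum_antidiagonal_choose_mul_poch (j : ℕ) (c t : ℂ) :
    ∑ ml ∈ antidiagonal j,
      (j.choose ml.1 : ℂ) * ((-1) ^ ml.1 * poch c ml.1 * poch (c + ml.1 + t) ml.2) =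
      poch t j := by
  induction j generalizing c with
  | zero => simp [poch]
  | succ j ih =>
    rw [sum_antidiagonal_choose_succ_mul (fun m l => (-1) ^ m * poch c m * poch (c + m + t) l)]
    have hstretch : ∀ ml ∈ antidiagonal j, (j.choose ml.1 : ℂ) *
        ((-1) ^ ml.1 * poch c ml.1 * poch (c + ml.1 + t) (ml.2 + 1)) = (c + t + j) *
        ((j.choose ml.1 : ℂ) * ((-1) ^ ml.1 * poch c ml.1 * poch (c + ml.1 + t) ml.2)) := by
      rintro ⟨m, l⟩ hml
      rw [HasAntidiagonal.mem_antidiagonal] at hml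
      rw [poch_succ, ← hml]
      push_cast
      ring
    have hpeel : ∀ ml ∈ antidiagonal j, (j.choose ml.2 : ℂ) *
        ((-1) ^ (ml.1 + 1) * poch c (ml.1 + 1) * poch (c + ↑(ml.1 + 1) + t) ml.2) = -c *
        ((j.choose ml.1 : ℂ) *
          ((-1) ^ ml.1 * poch (c + 1) ml.1 * poch (c + 1 + ml.1 + t) ml.2)) := by
      rintro ⟨m, l⟩ hml
      rw [HasAntidiagonal.mem_antidiagonal] at hml
      rw [poch_succ', Nat.choose_symm_of_eq_add hml.symm]
      push_cast
      ring_nf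
    rw [sum_congr rfl hstretch, sum_congr rfl hpeel, ← mul_sum, ← mul_sum, ih, ih, poch_succ]
    ring

noncomputable def jacobiCoeff (j : ℕ) (a b : ℂ) (m : ℕ) : ℂ :=
  poch (a + 1) j / j.factorial *
    (poch (-j) m * poch (j + a + b + 1) m / (poch (a + 1) m * m.factorial))

lemma F21_neg_natCast (j : ℕ) (b c x : ℂ) :
    F21 (-j) b c x =
      ∑ m ∈ range (j + 1), poch (-j) m * poch b m * x ^ m / (poch c m * m.factorial) :=
  tsum_eq_sum fun m hm => by
    rw [poch_neg_natCast, Nat.descFactorial_eq_zero_iff_lt.mpr (by simpa using hm)]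
    simp

lemma jacobiP_eq_sum (j : ℕ) (a b r : ℂ) :
    jacobiP j a b r = ∑ m ∈ range (j + 1), jacobiCoeff j a b m * ((1 - r) / 2) ^ m := by
  rw [jacobiP, F21_neg_natCast, mul_sum]
  refine sum_congr rfl fun m _ => ?_
  rw [jacobiCoeff]
  ring

noncomputable def jacobiWeight (A B r : ℝ) : ℝ := (1 - r) ^ A * (1 + r) ^ B

noncomputable def jacobiWeightIntegral (A B : ℂ) : ℂ :=
  2 ^ (A + B + 1) * (Gamma (A + 1) * Gamma (B + 1) / Gamma (A + B + 2))

section Weight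

variable {A B r : ℝ}

lemma jacobiWeight_nonneg (hr : r ∈ Set.Icc (-1) 1) : 0 ≤ jacobiWeight A B r :=
  mul_nonneg (Real.rpow_nonneg (by linarith [hr.2]) _) (Real.rpow_nonneg (by linarith [hr.1]) _)

lemma rpow_mul_pow_eq_rpow_add {x y : ℝ} (hx : 0 ≤ x) (hy : -1 < y) (n : ℕ) :
    x ^ y * x ^ n = x ^ (y + n) := by
  rcases Nat.eq_zero_or_pos n with rfl | hn
  · simp
  · rw [Real.rpow_add_natCast' hx]
    have : (1 : ℝ) ≤ n := by exact_mod_cast hn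
    linarith

lemma jacobiWeight_mul_one_sub_pow (hA : -1 < A) (hr : r ≤ 1) (m : ℕ) :
    jacobiWeight A B r * (1 - r) ^ m = jacobiWeight (A + m) B r := by
  rw [jacobiWeight, jacobiWeight, ← rpow_mul_pow_eq_rpow_add (by linarith) hA]
  ring

lemma jacobiWeight_mul_one_add_pow (hB : -1 < B) (hr : -1 ≤ r) (k : ℕ) :
    jacobiWeight A B r * (1 + r) ^ k = jacobiWeight A (B + k) r := by
  rw [jacobiWeight, jacobiWeight, ← rpow_mul_pow_eq_rpow_add (by linarith) hB, mul_assoc]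

lemma intervalIntegrable_jacobiWeight (hA : -1 < A) (hB : -1 < B) :
    IntervalIntegrable (jacobiWeight A B) volume (-1) 1 := by
  have h₁ : IntervalIntegrable (fun r : ℝ => (1 + r) ^ B) volume (-1) 0 := by
    simpa using (intervalIntegral.intervalIntegrable_rpow' hB (a := 0) (b := 1)).comp_add_left 1
  have h₂ : IntervalIntegrable (fun r : ℝ => (1 - r) ^ A) volume 0 1 := by
    simpa using
      ((intervalIntegral.intervalIntegrable_rpow' hA (a := 0) (b := 1)).comp_sub_left 1).symm
  refine IntervalIntegrable.trans (b := 0) (h₁.continuousOn_mul ?_) (h₂.mul_continuousOn ?_)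
  · refine ContinuousOn.rpow_const (by fun_prop) fun r hr => Or.inl ?_
    rw [Set.uIcc_of_le (by norm_num)] at hr
    linarith [hr.2]
  · refine ContinuousOn.rpow_const (by fun_prop) fun r hr => Or.inl ?_
    rw [Set.uIcc_of_le (by norm_num)] at hr
    linarith [hr.1]

lemma jacobiWeight_two_mul_sub_one {x : ℝ} (hx : x ∈ Set.Icc (0 : ℝ) 1) :
    (jacobiWeight A B (2 * x - 1) : ℂ) =
      2 ^ ((A : ℂ) + B) *
        ((x : ℂ) ^ ((B + 1 : ℂ) - 1) * (1 - (x : ℂ)) ^ ((A + 1 : ℂ) - 1)) := by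
  obtain ⟨hx₀, hx₁⟩ := hx
  have h₁ : 1 - (2 * x - 1) = 2 * (1 - x) := by ring
  have h₂ : 1 + (2 * x - 1) = 2 * x := by ring
  rw [jacobiWeight, h₁, h₂, Real.mul_rpow zero_le_two (by linarith),
    Real.mul_rpow zero_le_two hx₀, cpow_add _ _ two_ne_zero]
  push_cast
  rw [ofReal_cpow zero_le_two, ofReal_cpow zero_le_two, ofReal_cpow hx₀,
    ofReal_cpow (by linarith)]
  push_cast
  ring_nf

lemma integral_jacobiWeight (hA : -1 < A) (hB : -1 < B) :
    ∫ r in (-1 : ℝ)..1, (jacobiWeight A B r : ℂ) = jacobiWeightIntegral A B := by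
  have hsubst := intervalIntegral.integral_comp_mul_sub (fun r => (jacobiWeight A B r : ℂ))
    two_ne_zero 1 (a := 0) (b := 1)
  norm_num at hsubst
  have hbeta : ∫ x in (0 : ℝ)..1, (jacobiWeight A B (2 * x - 1) : ℂ) =
      2 ^ ((A : ℂ) + B) * betaIntegral (B + 1) (A + 1) := by
    rw [betaIntegral, ← intervalIntegral.integral_const_mul]
    refine intervalIntegral.integral_congr fun x hx => ?_
    rw [Set.uIcc_of_le zero_le_one] at hx
    exact jacobiWeight_two_mul_sub_one hx
  have hGamma := Gamma_mul_Gamma_eq_betaIntegral (s := B + 1) (t := A + 1)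
    (by simp; linarith) (by simp; linarith)
  have hGamma_ne : Gamma (B + 1 + (A + 1)) ≠ 0 :=
    Gamma_ne_zero_of_re_pos (by simp; linarith)
  have hsum : (B : ℂ) + 1 + (A + 1) = A + B + 2 := by ring
  rw [hsum] at hGamma hGamma_ne
  rw [jacobiWeightIntegral, cpow_add _ _ two_ne_zero, cpow_one, mul_comm (Gamma _), hGamma]
  field_simp
  linear_combination 2 * hsubst.symm.trans hbeta

lemma intervalIntegrable_jacobiWeight_mul (hA : -1 < A) (hB : -1 < B) {g : ℝ → ℂ}
    (hg : Continuous g) :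
    IntervalIntegrable (fun r => (jacobiWeight A B r : ℂ) * g r) volume (-1) 1 := by
  have h : IntervalIntegrable (fun r => (jacobiWeight A B r : ℂ)) volume (-1) 1 := by
    have := intervalIntegrable_jacobiWeight hA hB
    rw [intervalIntegrable_iff] at this ⊢
    exact this.ofReal
  exact h.mul_continuousOn hg.continuousOn

lemma norm_jacobiWeight_mul_pow_div_factorial_le (hr : r ∈ Set.Icc (-1) 1) (c : ℂ) (k : ℕ) :
    ‖(jacobiWeight A B r : ℂ) * ((c * (1 + r)) ^ k / k.factorial)‖ ≤
      jacobiWeight A B r * ((2 * ‖c‖) ^ k / k.factorial) := by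
  have h1r : ‖(1 + r : ℂ)‖ ≤ 2 := by
    rw [← ofReal_one, ← ofReal_add, norm_real, Real.norm_of_nonneg (by linarith [hr.1])]
    linarith [hr.2]
  simp only [norm_mul, norm_div, norm_pow, norm_real, norm_natCast,
    Real.norm_of_nonneg (jacobiWeight_nonneg hr)]
  rw [mul_comm 2 ‖c‖]
  gcongr
  exact jacobiWeight_nonneg hr

lemma integral_jacobiWeight_mul_pow_div_factorial (hA : -1 < A) (hB : -1 < B) (c : ℂ) (k : ℕ) :
    ∫ r in (-1 : ℝ)..1, (jacobiWeight A B r : ℂ) * ((c * (1 + r)) ^ k / k.factorial) =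
      c ^ k / k.factorial * jacobiWeightIntegral A (B + k) := by
  have hW := integral_jacobiWeight hA (B := B + k) (by linarith [k.cast_nonneg (α := ℝ)])
  push_cast at hW
  rw [← hW, ← intervalIntegral.integral_const_mul]
  refine intervalIntegral.integral_congr fun r hr => ?_
  rw [Set.uIcc_of_le (by norm_num)] at hr
  simp only [← jacobiWeight_mul_one_add_pow hB hr.1, mul_pow]
  push_cast
  ring

lemma hasSum_integral_jacobiWeight_mul_exp (hA : -1 < A) (hB : -1 < B) (c : ℂ) :
    HasSum (fun k : ℕ => c ^ k / k.factorial * jacobiWeightIntegral A (B + k))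
      (∫ r in (-1 : ℝ)..1, (jacobiWeight A B r : ℂ) * exp (c * (1 + r))) := by
  have hIoc : Set.uIoc (-1 : ℝ) 1 ⊆ Set.Icc (-1) 1 := by
    rw [Set.uIoc_of_le (by norm_num)]
    exact Set.Ioc_subset_Icc_self
  set F : ℕ → ℝ → ℂ := fun k r =>
    (jacobiWeight A B r : ℂ) * ((c * (1 + r)) ^ k / k.factorial)
  set bound : ℕ → ℝ → ℝ := fun k r => jacobiWeight A B r * ((2 * ‖c‖) ^ k / k.factorial)
  have hsum := intervalIntegral.hasSum_integral_of_dominated_convergence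
    (F := F) (f := fun r => (jacobiWeight A B r : ℂ) * exp (c * (1 + r))) bound
    (fun k => (intervalIntegrable_jacobiWeight_mul hA hB (by fun_prop)).def'.aestronglyMeasurable)
    (fun k => ae_of_all _ fun r hr => norm_jacobiWeight_mul_pow_div_factorial_le (hIoc hr) c k)
    (ae_of_all _ fun r _ => (Real.summable_pow_div_factorial _).mul_left _)
    (by simpa only [bound, tsum_mul_left] using (intervalIntegrable_jacobiWeight hA hB).mul_const _)
    (ae_of_all _ fun r _ => by
      rw [exp_eq_exp_ℂ]
      exact (NormedSpace.expSeries_div_hasSum_exp (c * (1 + r))).mul_left _)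
  simpa only [F, integral_jacobiWeight_mul_pow_div_factorial hA hB] using hsum

end Weight

/-- The moment `∫_{-1}^{1} (1-r)^a (1+r)^b P_j^{(a,b)}(r) (1+r)^k dr`. -/
noncomputable def jacobiMoment (a b : ℂ) (j k : ℕ) : ℂ :=
  2 ^ (a + b + 1) * 2 ^ k *
    (Gamma (a + j + 1) * Gamma (b + k + 1) / (j.factorial * Gamma (a + b + j + k + 2))) *
    k.descFactorial j

section Moment

variable {a b : ℂ}

lemma jacobiCoeff_mul_jacobiWeightIntegral (ha : -1 < a.re) (hb : -1 < b.re)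
    {j m l : ℕ} (hml : m + l = j) (k : ℕ) :
    jacobiCoeff j a b m / 2 ^ m * jacobiWeightIntegral (a + m) (b + k) =
      2 ^ (a + b + 1) * 2 ^ k * (Gamma (a + j + 1) * Gamma (b + k + 1) /
        (j.factorial * Gamma (a + b + j + k + 2))) *
      (j.choose m *
        ((-1) ^ m * poch (a + b + j + 1) m * poch (a + b + j + 1 + m + (k - j + 1)) l)) := by
  subst hml
  have ha' : 0 < (a + 1).re := by simp; linarith
  have hab : 0 < (a + b + m + k + 2).re := by
    simp; linarith [m.cast_nonneg (α := ℝ), k.cast_nonneg (α := ℝ)]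
  have hΓm : Gamma (a + m + 1) = Gamma (a + 1) * poch (a + 1) m := by
    rw [← Gamma_add_natCast ha']; ring_nf
  have hΓj : Gamma (a + ↑(m + l) + 1) = Gamma (a + 1) * poch (a + 1) (m + l) := by
    rw [← Gamma_add_natCast ha']; push_cast; ring_nf
  have hΓab : Gamma (a + b + ↑(m + l) + k + 2) =
      Gamma (a + b + m + k + 2) * poch (a + b + m + k + 2) l := by
    rw [← Gamma_add_natCast hab]; push_cast; ring_nf
  have hpow : (2 : ℂ) ^ (a + m + (b + k) + 1) = 2 ^ (a + b + 1) * 2 ^ m * 2 ^ k := by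
    rw [show a + m + (b + k) + 1 = a + b + 1 + m + k by ring, cpow_add _ _ two_ne_zero,
      cpow_add _ _ two_ne_zero, cpow_natCast, cpow_natCast]
  have hpoch : poch (a + b + ↑(m + l) + 1 + m + (k - ↑(m + l) + 1)) l =
      poch (a + b + m + k + 2) l := by
    push_cast; ring_nf
  have hpoch' : poch (↑(m + l) + a + b + 1) m = poch (a + b + ↑(m + l) + 1) m := by ring_nf
  have hpa := poch_ne_zero_of_re_pos ha' m
  have hpab := poch_ne_zero_of_re_pos hab l
  have hm : (m.factorial : ℂ) ≠ 0 := Nat.cast_ne_zero.mpr m.factorial_ne_zero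
  rw [jacobiCoeff, jacobiWeightIntegral, hpow, show a + m + (b + k) + 2 = a + b + m + k + 2 by ring,
    hΓm, hΓj, hΓab, hpoch, hpoch', poch_neg_natCast, Nat.descFactorial_eq_factorial_mul_choose]
  field_simp
  push_cast
  ring

lemma sum_jacobiCoeff_mul_jacobiWeightIntegral (ha : -1 < a.re) (hb : -1 < b.re) (j k : ℕ) :
    ∑ m ∈ range (j + 1), jacobiCoeff j a b m / 2 ^ m * jacobiWeightIntegral (a + m) (b + k) =
      jacobiMoment a b j k := by
  rw [← Nat.sum_antidiagonal_eq_sum_range_succ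
      (fun m _ => jacobiCoeff j a b m / 2 ^ m * jacobiWeightIntegral (a + m) (b + k)),
    sum_congr rfl fun ml hml => jacobiCoeff_mul_jacobiWeightIntegral ha hb
      (HasAntidiagonal.mem_antidiagonal.mp hml) k,
    ← mul_sum, sum_antidiagonal_choose_mul_poch, poch_natCast_sub_add_one, jacobiMoment]

lemma jacobiMoment_of_lt {j k : ℕ} (h : k < j) : jacobiMoment a b j k = 0 := by
  simp [jacobiMoment, Nat.descFactorial_eq_zero_iff_lt.mpr h]

lemma pow_div_factorial_mul_jacobiMoment_add (ha : -1 < a.re) (hb : -1 < b.re) (c : ℂ)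
    (j n : ℕ) :
    c ^ (n + j) / (n + j).factorial * jacobiMoment a b j (n + j) =
      2 ^ (a + b + 1) *
        (Gamma (a + j + 1) * Gamma (b + j + 1) / (j.factorial * Gamma (a + b + 2 * j + 2))) *
        (2 * c) ^ j *
        (poch (b + j + 1) n * (2 * c) ^ n / (poch (a + b + 2 * j + 2) n * n.factorial)) := by
  have hb' : 0 < (b + j + 1).re := by simp; linarith [j.cast_nonneg (α := ℝ)]
  have hab : 0 < (a + b + 2 * j + 2).re := by simp; linarith [j.cast_nonneg (α := ℝ)]
  have hΓb : Gamma (b + ↑(n + j) + 1) = Gamma (b + j + 1) * poch (b + j + 1) n := by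
    rw [← Gamma_add_natCast hb']; push_cast; ring_nf
  have hΓab : Gamma (a + b + j + ↑(n + j) + 2) =
      Gamma (a + b + 2 * j + 2) * poch (a + b + 2 * j + 2) n := by
    rw [← Gamma_add_natCast hab]; push_cast; ring_nf
  have hfact : ((n + j).factorial : ℂ) = n.factorial * (n + j).descFactorial j := by
    have := Nat.factorial_mul_descFactorial (Nat.le_add_left j n)
    rw [Nat.add_sub_cancel] at this
    exact_mod_cast this.symm
  rw [jacobiMoment, hΓb, hΓab, hfact]
  field_simp
  ring

end Moment

lemma hasSum_integral_jacobiWeight_mul_jacobiP_mul_exp {a b : ℝ} (ha : -1 < a) (hb : -1 < b)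
    (j : ℕ) (c : ℂ) :
    HasSum (fun k : ℕ => exp (-c) * (c ^ k / k.factorial * jacobiMoment a b j k))
      (∫ r in (-1 : ℝ)..1, (jacobiWeight a b r : ℂ) * jacobiP j a b r * exp (c * r)) := by
  have ham : ∀ m : ℕ, -1 < a + m := fun m => by linarith [m.cast_nonneg (α := ℝ)]
  have hexpand : ∀ r ∈ Set.uIcc (-1 : ℝ) 1,
      (jacobiWeight a b r : ℂ) * jacobiP j a b r * exp (c * r) =
        ∑ m ∈ range (j + 1), exp (-c) * (jacobiCoeff j a b m / 2 ^ m) *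
          ((jacobiWeight (a + m) b r : ℂ) * exp (c * (1 + r))) := by
    intro r hr
    rw [Set.uIcc_of_le (by norm_num)] at hr
    rw [jacobiP_eq_sum, mul_sum, sum_mul]
    refine sum_congr rfl fun m _ => ?_
    rw [← jacobiWeight_mul_one_sub_pow ha hr.2, show c * r = -c + c * (1 + r) by ring, exp_add,
      div_pow]
    push_cast
    ring
  rw [intervalIntegral.integral_congr hexpand, intervalIntegral.integral_finsetSum fun m _ =>
    (intervalIntegrable_jacobiWeight_mul (ham m) hb (by fun_prop)).const_mul _]
  simp_rw [intervalIntegral.integral_const_mul]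
  refine (hasSum_sum fun m _ =>
    (hasSum_integral_jacobiWeight_mul_exp (ham m) hb c).mul_left _).congr_fun fun k => ?_
  have ha' : -1 < (a : ℂ).re := by simpa using ha
  have hb' : -1 < (b : ℂ).re := by simpa using hb
  rw [← sum_jacobiCoeff_mul_jacobiWeightIntegral ha' hb', mul_sum, mul_sum]
  refine sum_congr rfl fun m _ => ?_
  push_cast
  ring

/-- The integral `∫_{-1}^{1} (1-r)^a (1+r)^b P_j^{(a,b)}(r) e^{cr} dr` evaluated in closed
form via a `₁F₁`. -/
theorem jacobi_exp_integral (a b : ℝ) (ha : -1 < a) (hb : -1 < b) (j : ℕ) (c : ℂ) :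
    ∫ r in (-1 : ℝ)..1,
        (((1 - r) ^ a * (1 + r) ^ b : ℝ) : ℂ) * jacobiP j (a : ℂ) (b : ℂ) (r : ℂ) *
          Complex.exp (c * (r : ℂ))
      = ((2 : ℝ) ^ (a + b + 1) : ℝ) *
          ((Real.Gamma (a + j + 1) * Real.Gamma (b + j + 1) /
            (j.factorial * Real.Gamma (a + b + 2 * j + 2)) : ℝ) : ℂ) *
          Complex.exp (-c) * (2 * c) ^ j *
          F11 ((b : ℂ) + j + 1) ((a : ℂ) + b + 2 * j + 2) (2 * c) := by
  have ha' : -1 < (a : ℂ).re := by simpa using ha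
  have hb' : -1 < (b : ℂ).re := by simpa using hb
  have h := hasSum_integral_jacobiWeight_mul_jacobiP_mul_exp ha hb j c
  rw [← hasSum_nat_add_iff' j, sum_eq_zero fun k hk => by
      rw [jacobiMoment_of_lt (mem_range.mp hk), mul_zero, mul_zero], sub_zero] at h
  simp only [pow_div_factorial_mul_jacobiMoment_add ha' hb'] at h
  refine h.tsum_eq.symm.trans ?_
  rw [tsum_mul_left, tsum_mul_left, F11]
  push_cast [ofReal_cpow zero_le_two, ← Gamma_ofReal]
  ring
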